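/- arXiv:1701.08940 — 2 statements merged into one kernel-verified Lean document; each statement's English description precedes it below -/
import Mathlib

section
/- For every τ ∈ H and (x,y) ∈ ℝ²: (1) φ̃_{τ+1}(x,y) = e((y²−x²)/2)·φ̃_τ(x,y); and (2) if x ≠ 0, then the function τ ↦ φ̃_τ(x,y) satisfies ξ(φ̃_·(x,y))(τ) = φ_τ(x,y). -/
open MeasureTheory Filter Set

noncomputable section

/-- `e(z) = exp(2πiz)` -/
def eC (z : ℂ) : ℂ := Complex.exp (2 * Real.pi * Complex.I * z)

/-- The complementary error function `erfc(x) = (2/√π)∫_x^∞ e^{-r²} dr`. -/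
def erfc (x : ℝ) : ℝ := (2 / Real.sqrt Real.pi) * ∫ r in Set.Ioi x, Real.exp (-(r ^ 2))

/-- `φ_τ(x,y) = √(2v)·x·e((x²/2)τ - (y²/2)·conj τ)` where `v = Im τ`. -/
def phi (τ : ℂ) (x y : ℝ) : ℂ :=
  (Real.sqrt (2 * τ.im) : ℂ) * (x : ℂ) *
    eC (((x : ℂ) ^ 2 / 2) * τ - ((y : ℂ) ^ 2 / 2) * (starRingEnd ℂ) τ)

/-- `φ*_τ(x,y) = e(((y²-x²)/2)τ)·sgn(x)·erfc(√(2πv)|x|)`. -/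
def phiStar (τ : ℂ) (x y : ℝ) : ℂ :=
  eC ((((y : ℂ) ^ 2 - (x : ℂ) ^ 2) / 2) * τ) * (Real.sign x : ℂ) *
    (erfc (Real.sqrt (2 * Real.pi * τ.im) * |x|) : ℂ)

/-- `φ⁺_τ(x,y) = e(((y²-x²)/2)τ)·sgn(x)·1_{y²>x²}`. -/
def phiPlus (τ : ℂ) (x y : ℝ) : ℂ :=
  eC ((((y : ℂ) ^ 2 - (x : ℂ) ^ 2) / 2) * τ) * (Real.sign x : ℂ) *
    (if x ^ 2 < y ^ 2 then 1 else 0)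

/-- `φ̃_τ = φ⁺_τ - φ*_τ`. -/
def phiTilde (τ : ℂ) (x y : ℝ) : ℂ := phiPlus τ x y - phiStar τ x y

/-- The Wirtinger derivative `∂f/∂conj(τ) = (1/2)(∂f/∂u + i·∂f/∂v)`. -/
def dbar (f : ℂ → ℂ) (τ : ℂ) : ℂ :=
  (1 / 2) * (fderiv ℝ f τ 1 + Complex.I * fderiv ℝ f τ Complex.I)

/-- The `ξ`-operator in weight one: `ξ(f)(τ) = 2iv·conj(∂f/∂conj(τ))`. -/
def xi (f : ℂ → ℂ) (τ : ℂ) : ℂ :=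
  2 * Complex.I * (τ.im : ℂ) * (starRingEnd ℂ) (dbar f τ)

/-!
Write `c = (y² - x²)/2` and `v = Im τ`. Since `v` is invariant under `τ ↦ τ + 1`, periodicity
reduces to `e(c(τ + 1)) = e(c) e(cτ)`.

For the `ξ`-equation, `φ̃_τ = e(cτ) sgn(x) (1_{y²>x²} - erfc(√(2πv)|x|))` is a holomorphic
function of `τ` times a function of `v` alone, so `∂/∂τ̄` only differentiates the second factor,
giving `(i/2) e(cτ) sgn(x) · |x| √(2v) e^{-2πx²v} / v`. Conjugating and multiplying by `2iv`
yields `x √(2v) e^{-2πx²v} e(-cτ̄)`, which is `φ_τ` because `e((x²/2)(τ - τ̄)) = e^{-2πx²v}`.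
-/

theorem eC_add (a b : ℂ) : eC (a + b) = eC a * eC b := by
  simp only [eC, mul_add, Complex.exp_add]

theorem conj_eC (z : ℂ) : starRingEnd ℂ (eC z) = eC (-starRingEnd ℂ z) := by
  simp only [eC, ← Complex.exp_conj, map_mul, map_ofNat, Complex.conj_ofReal, Complex.conj_I]
  ring_nf

theorem eC_ofReal_mul_I (t : ℝ) : eC (t * Complex.I) = Real.exp (-(2 * Real.pi * t)) := by
  rw [eC, Complex.ofReal_exp]
  push_cast
  congr 1
  linear_combination (2 * Real.pi * t : ℂ) * Complex.I_sq

theorem phiTilde_add_one (τ : ℂ) (x y : ℝ) :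
    phiTilde (τ + 1) x y = eC ((((y : ℂ) ^ 2 - (x : ℂ) ^ 2) / 2)) * phiTilde τ x y := by
  simp only [phiTilde, phiPlus, phiStar, mul_add, mul_one, eC_add, Complex.add_im,
    Complex.one_im, add_zero]
  ring

theorem hasDerivAt_integral_Ioi {E : Type*} [NormedAddCommGroup E] [NormedSpace ℝ E]
    [CompleteSpace E] {f : ℝ → E} (hf : Integrable f) (hc : Continuous f) (x : ℝ) :
    HasDerivAt (fun a => ∫ r in Ioi a, f r) (-f x) x := by
  have hsplit : (fun a => ∫ r in Ioi a, f r) = fun a => (∫ r in Ioi 0, f r) - ∫ r in 0..a, f r := by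
    funext a
    rw [← intervalIntegral.integral_Ioi_sub_Ioi' hf.integrableOn hf.integrableOn, sub_sub_cancel]
  rw [hsplit, ← zero_sub]
  exact (hasDerivAt_const x _).sub (intervalIntegral.integral_hasDerivAt_right
    hf.intervalIntegrable (hc.stronglyMeasurableAtFilter _ _) hc.continuousAt)

theorem hasDerivAt_erfc (x : ℝ) :
    HasDerivAt erfc (-(2 / Real.sqrt Real.pi * Real.exp (-(x ^ 2)))) x := by
  have hf : Integrable (fun r : ℝ => Real.exp (-(r ^ 2))) := by
    simpa using integrable_exp_neg_mul_sq one_pos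
  rw [← mul_neg]
  exact (hasDerivAt_integral_Ioi hf (by fun_prop) x).const_mul _

theorem hasDerivAt_erfc_sqrt_mul (a : ℝ) {t : ℝ} (ht : 0 < t) :
    HasDerivAt (fun s => erfc (Real.sqrt (2 * Real.pi * s) * a))
      (-(a * Real.sqrt (2 * t) * Real.exp (-(2 * Real.pi * a ^ 2 * t))) / t) t := by
  have hpos : 0 < 2 * Real.pi * t := by positivity
  have hsq : HasDerivAt (fun s => Real.sqrt (2 * Real.pi * s) * a)
      (2 * Real.pi / (2 * Real.sqrt (2 * Real.pi * t)) * a) t := by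
    simpa using (((hasDerivAt_id t).const_mul (2 * Real.pi)).sqrt hpos.ne').mul_const a
  refine ((hasDerivAt_erfc _).comp t hsq).congr_deriv ?_
  have hsplit : Real.sqrt (2 * Real.pi * t) = Real.sqrt Real.pi * Real.sqrt (2 * t) := by
    rw [← Real.sqrt_mul Real.pi_pos.le]; ring_nf
  rw [mul_pow, Real.sq_sqrt hpos.le, hsplit]
  have h1 : Real.sqrt (2 * t) ^ 2 = 2 * t := Real.sq_sqrt (by positivity)
  have : 0 < Real.sqrt (2 * t) := by positivity
  have : 0 < Real.sqrt Real.pi := by positivity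
  field_simp
  rw [h1, Real.sq_sqrt Real.pi_pos.le]
  ring

theorem dbar_mul_comp_im {E : ℂ → ℂ} {G : ℝ → ℂ} {τ E' G' : ℂ} (hE : HasDerivAt E E' τ)
    (hG : HasDerivAt G G' τ.im) :
    dbar (fun σ => E σ * G σ.im) τ = Complex.I / 2 * E τ * G' := by
  have hGim : HasFDerivAt (fun σ : ℂ => G σ.im) (Complex.imCLM.smulRight G') τ :=
    (hG.hasFDerivAt.comp τ Complex.imCLM.hasFDerivAt).congr_fderiv (by ext; simp)
  have hf : HasFDerivAt (fun σ => E σ * G σ.im) (E τ • Complex.imCLM.smulRight G' +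
      G τ.im • (ContinuousLinearMap.toSpanSingleton ℂ E').restrictScalars ℝ) τ :=
    (hE.hasFDerivAt.restrictScalars ℝ).mul hGim
  rw [dbar, hf.fderiv]
  simp only [add_apply, smul_apply,
    ContinuousLinearMap.smulRight_apply, ContinuousLinearMap.coe_restrictScalars',
    ContinuousLinearMap.toSpanSingleton_apply, Complex.imCLM_apply, Complex.one_im, Complex.I_im,
    zero_smul, one_smul, smul_eq_mul]
  linear_combination (G τ.im * E' / 2) * Complex.I_sq

theorem Real.sign_mul_abs (x : ℝ) : Real.sign x * |x| = x := by
  rcases lt_trichotomy x 0 with h | rfl | h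
  · rw [Real.sign_of_neg h, abs_of_neg h]; ring
  · simp
  · rw [Real.sign_of_pos h, abs_of_pos h]; ring

theorem xi_phiTilde {τ : ℂ} (hτ : 0 < τ.im) (x y : ℝ) :
    xi (fun σ => phiTilde σ x y) τ = phi τ x y := by
  set c : ℂ := ((y : ℂ) ^ 2 - (x : ℂ) ^ 2) / 2
  set A : ℂ := if x ^ 2 < y ^ 2 then 1 else 0
  set v := τ.im with hv
  set g : ℝ := |x| * Real.sqrt (2 * v) * Real.exp (-(2 * Real.pi * x ^ 2 * v)) with hg
  have hrepr : (fun σ => phiTilde σ x y) = fun σ => (eC (c * σ) * Real.sign x) *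
      (A - erfc (Real.sqrt (2 * Real.pi * σ.im) * |x|)) := by
    funext σ
    simp only [phiTilde, phiPlus, phiStar]
    ring
  have hE : DifferentiableAt ℂ (fun σ => eC (c * σ) * Real.sign x) τ := by
    unfold eC; fun_prop
  have hG : HasDerivAt (fun t : ℝ => A - erfc (Real.sqrt (2 * Real.pi * t) * |x|))
      ((g / v : ℝ) : ℂ) v := by
    refine ((hasDerivAt_erfc_sqrt_mul |x| hτ).ofReal_comp.const_sub A).congr_deriv ?_
    rw [hg, sq_abs]
    push_cast
    ring
  have hphase : eC ((x : ℂ) ^ 2 / 2 * τ - (y : ℂ) ^ 2 / 2 * starRingEnd ℂ τ) =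
      Real.exp (-(2 * Real.pi * x ^ 2 * v)) * eC (-(c * starRingEnd ℂ τ)) := by
    rw [show 2 * Real.pi * x ^ 2 * v = 2 * Real.pi * (x ^ 2 * v) by ring, ← eC_ofReal_mul_I,
      ← eC_add]
    congr 1
    have := Complex.sub_conj τ
    push_cast at this ⊢
    linear_combination ((x : ℂ) ^ 2 / 2) * this
  have hc_real : starRingEnd ℂ c = c :=
    Complex.conj_eq_iff_real.mpr ⟨(y ^ 2 - x ^ 2) / 2, by push_cast; rfl⟩
  have hv0 : (v : ℂ) ≠ 0 := by exact_mod_cast hτ.ne'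
  have hxs : (Real.sign x : ℂ) * (|x| : ℝ) = x := by exact_mod_cast Real.sign_mul_abs x
  rw [xi, hrepr, dbar_mul_comp_im hE.hasDerivAt hG, phi, hphase, ← hv, ← hxs, hg]
  simp only [map_mul, map_div₀, conj_eC, Complex.conj_I, Complex.conj_ofReal, map_ofNat, hc_real]
  push_cast
  field_simp
  linear_combination
    -(eC (-(c * starRingEnd ℂ τ)) * Real.sign x * (|x| : ℝ) * Real.sqrt (2 * v)) * Complex.I_sq

/-- (1) `φ̃_{τ+1}(x,y) = e((y²-x²)/2)·φ̃_τ(x,y)`, and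
(2) for `x ≠ 0`, `ξ(φ̃_·(x,y))(τ) = φ_τ(x,y)`. -/
theorem stmt5 (τ : ℂ) (hτ : 0 < τ.im) :
    (∀ x y : ℝ, phiTilde (τ + 1) x y =
      eC ((((y : ℂ) ^ 2 - (x : ℂ) ^ 2) / 2)) * phiTilde τ x y) ∧
    (∀ x y : ℝ, x ≠ 0 → xi (fun σ => phiTilde σ x y) τ = phi τ x y) :=
  ⟨phiTilde_add_one τ, fun x y _ => xi_phiTilde hτ x y⟩

end
end

section
/- Let N be a positive integer, τ ∈ H, and let x₁, x₂ be real numbers with x₁x₂ < 0. Then ∫_0^∞ φ_τ(ι_t(x₁,x₂)) dt/t = 0, the integral converging absolutely. -/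
/-!
The substitution `t ↦ c/t` with `c = -x₁/x₂ > 0` preserves the measure `dt/t` and maps
`ι_t(x₁,x₂) = (X, Y)` to `ι_{c/t}(x₁,x₂) = (-X, Y)`; since `φ_τ` is odd in its first variable,
the integral equals its own negative. Absolute convergence comes from
`|φ_τ(ι_t)| = √(2v) |X| exp(-π v (x₁²/t² + x₂² t²)/N)`, which decays like a Gaussian at both ends.
-/

open MeasureTheory Filter Set

noncomputable section

/-- The isometry `ι_t(x₁,x₂) = ((t⁻¹x₁+tx₂)/√(2N), (t⁻¹x₁-tx₂)/√(2N))`. -/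
def iota (N : ℕ) (t x₁ x₂ : ℝ) : ℝ × ℝ :=
  ((t⁻¹ * x₁ + t * x₂) / Real.sqrt (2 * N), (t⁻¹ * x₁ - t * x₂) / Real.sqrt (2 * N))

open Real

theorem integral_comp_mul_inv_div_Ioi (f : ℝ → ℂ) {c : ℝ} (hc : 0 < c) :
    ∫ t in Ioi 0, f (c * t⁻¹) / t = ∫ t in Ioi 0, f t / t := by
  -- both sides are Mellin transforms at `s = 0`
  have h := mellin_comp_inv (fun u => f (c * u)) 0
  rw [neg_zero, mellin_comp_mul_left f 0 hc] at h
  simpa [mellin, div_eq_inv_mul, Complex.cpow_neg_one] using h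

theorem integral_div_Ioi_eq_zero_of_comp_mul_inv_eq_neg {f : ℝ → ℂ} {c : ℝ} (hc : 0 < c)
    (hf : ∀ t > 0, f (c * t⁻¹) = -f t) : ∫ t in Ioi 0, f t / t = 0 := by
  have h := integral_comp_mul_inv_div_Ioi f hc
  rw [setIntegral_congr_fun measurableSet_Ioi fun t ht => by rw [hf t ht, neg_div],
    integral_neg] at h
  exact neg_eq_self.1 h

theorem phi_neg_left (τ : ℂ) (x y : ℝ) : phi τ (-x) y = -phi τ x y := by
  rw [phi, phi, Complex.ofReal_neg, neg_sq]
  ring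

theorem norm_phi (τ : ℂ) (x y : ℝ) :
    ‖phi τ x y‖ = √(2 * τ.im) * |x| * exp (-(π * τ.im * (x ^ 2 + y ^ 2))) := by
  rw [phi, eC, norm_mul, norm_mul, Complex.norm_real, norm_of_nonneg (sqrt_nonneg _),
    Complex.norm_real, norm_eq_abs, Complex.norm_exp]
  congr 2
  simp only [← Complex.ofReal_pow, ← Complex.ofReal_ofNat, ← Complex.ofReal_div,
    Complex.mul_re, Complex.mul_im, Complex.sub_re, Complex.sub_im, Complex.I_re, Complex.I_im,
    Complex.conj_re, Complex.conj_im, Complex.ofReal_re, Complex.ofReal_im]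
  ring

theorem measurable_phi_iota_div (N : ℕ) (τ : ℂ) (x₁ x₂ : ℝ) :
    Measurable fun t : ℝ => phi τ (iota N t x₁ x₂).1 (iota N t x₁ x₂).2 / (t : ℂ) := by
  unfold phi eC iota
  fun_prop

theorem iota_fst_sq_add_snd_sq (N : ℕ) (t x₁ x₂ : ℝ) :
    (iota N t x₁ x₂).1 ^ 2 + (iota N t x₁ x₂).2 ^ 2 = ((t⁻¹ * x₁) ^ 2 + (t * x₂) ^ 2) / N := by
  rw [iota, div_pow, div_pow, ← add_div, sq_sqrt (by positivity)]
  ring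

theorem abs_iota_fst_le (N : ℕ) {t : ℝ} (ht : 0 < t) (x₁ x₂ : ℝ) :
    |(iota N t x₁ x₂).1| ≤ (t⁻¹ * |x₁| + t * |x₂|) / √(2 * N) := by
  rw [iota, abs_div, abs_of_nonneg (sqrt_nonneg _)]
  gcongr
  calc |t⁻¹ * x₁ + t * x₂| ≤ |t⁻¹ * x₁| + |t * x₂| := abs_add_le _ _
    _ = t⁻¹ * |x₁| + t * |x₂| := by rw [abs_mul, abs_mul, abs_of_pos ht, abs_of_pos (inv_pos.2 ht)]

theorem iota_comp_mul_inv (N : ℕ) {c t x₁ x₂ : ℝ} (hc : c ≠ 0) (ht : t ≠ 0) (hcx : c * x₂ = -x₁) :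
    iota N (c * t⁻¹) x₁ x₂ = (-(iota N t x₁ x₂).1, (iota N t x₁ x₂).2) := by
  have hx₁ : (c * t⁻¹)⁻¹ * x₁ = -(t * x₂) := by
    rw [← neg_neg x₁, ← hcx]
    field_simp
  have hx₂ : c * t⁻¹ * x₂ = -(t⁻¹ * x₁) := by
    rw [mul_right_comm, hcx]
    ring
  simp only [iota, hx₁, hx₂, Prod.mk.injEq]
  constructor <;> ring

theorem mul_exp_neg_mul_le_inv {α : ℝ} (hα : 0 < α) (s : ℝ) : s * exp (-(α * s)) ≤ α⁻¹ :=
  calc s * exp (-(α * s)) = α⁻¹ * (α * s * exp (-(α * s))) := by field_simp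
    _ ≤ α⁻¹ * 1 := by
      gcongr
      exact (mul_exp_neg_le_exp_neg_one _).trans (exp_le_one_iff.2 (by norm_num))
    _ = α⁻¹ := mul_one _

theorem norm_phi_iota_div_le {N : ℕ} {τ : ℂ} {x₁ x₂ t : ℝ} (hN : 0 < N) (hτ : 0 < τ.im)
    (hx₁ : x₁ ≠ 0) (ht : 0 < t) :
    ‖phi τ (iota N t x₁ x₂).1 (iota N t x₁ x₂).2 / (t : ℂ)‖ ≤
      √(2 * τ.im) / √(2 * N) * (N / (π * τ.im * |x₁|) + |x₂|) *
        exp (-(π * τ.im * x₂ ^ 2 / N) * t ^ 2) := by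
  set α := π * τ.im * x₁ ^ 2 / N
  set β := π * τ.im * x₂ ^ 2 / N
  have hα : 0 < α := by positivity
  have hsplit : exp (-(π * τ.im * ((iota N t x₁ x₂).1 ^ 2 + (iota N t x₁ x₂).2 ^ 2)))
      = exp (-(α * (t⁻¹) ^ 2)) * exp (-β * t ^ 2) := by
    rw [← exp_add, iota_fst_sq_add_snd_sq]
    congr 1
    simp only [α, β]
    ring
  have hdecay := mul_exp_neg_mul_le_inv hα ((t⁻¹) ^ 2)
  have hle_one : exp (-(α * (t⁻¹) ^ 2)) ≤ 1 :=
    exp_le_one_iff.2 (neg_nonpos.2 (by positivity))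
  have hα_inv : |x₁| * α⁻¹ = N / (π * τ.im * |x₁|) := by
    simp only [α, ← sq_abs x₁]
    field_simp
  calc ‖phi τ (iota N t x₁ x₂).1 (iota N t x₁ x₂).2 / (t : ℂ)‖
      = √(2 * τ.im) * |(iota N t x₁ x₂).1| *
          (exp (-(α * (t⁻¹) ^ 2)) * exp (-β * t ^ 2)) / t := by
        rw [norm_div, Complex.norm_real, norm_of_nonneg ht.le, norm_phi, hsplit]
    _ ≤ √(2 * τ.im) * ((t⁻¹ * |x₁| + t * |x₂|) / √(2 * N)) *
          (exp (-(α * (t⁻¹) ^ 2)) * exp (-β * t ^ 2)) / t := by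
        gcongr
        exact abs_iota_fst_le N ht x₁ x₂
    _ = √(2 * τ.im) / √(2 * N) * (|x₁| * ((t⁻¹) ^ 2 * exp (-(α * (t⁻¹) ^ 2))) +
          |x₂| * exp (-(α * (t⁻¹) ^ 2))) * exp (-β * t ^ 2) := by
        field_simp
    _ ≤ √(2 * τ.im) / √(2 * N) * (|x₁| * α⁻¹ + |x₂| * 1) * exp (-β * t ^ 2) := by
        gcongr
    _ = _ := by rw [hα_inv, mul_one]

theorem integrableOn_phi_iota_div {N : ℕ} {τ : ℂ} {x₁ x₂ : ℝ} (hN : 0 < N) (hτ : 0 < τ.im)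
    (hx₁ : x₁ ≠ 0) (hx₂ : x₂ ≠ 0) :
    IntegrableOn (fun t : ℝ => phi τ (iota N t x₁ x₂).1 (iota N t x₁ x₂).2 / (t : ℂ)) (Ioi 0) :=
  have hβ : 0 < π * τ.im * x₂ ^ 2 / N := by positivity
  Integrable.mono' ((integrable_exp_neg_mul_sq hβ).const_mul _).integrableOn
    (measurable_phi_iota_div N τ x₁ x₂).aestronglyMeasurable
    ((ae_restrict_iff' measurableSet_Ioi).2 <| ae_of_all _ fun _ ht =>
      norm_phi_iota_div_le hN hτ hx₁ ht)

/-- for `x₁x₂ < 0`, `∫_0^∞ φ_τ(ι_t(x₁,x₂)) dt/t = 0`, the integral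
converging absolutely. -/
theorem stmt9 (N : ℕ) (hN : 0 < N) (τ : ℂ) (hτ : 0 < τ.im) (x₁ x₂ : ℝ)
    (hx : x₁ * x₂ < 0) :
    IntegrableOn (fun t : ℝ =>
      phi τ (iota N t x₁ x₂).1 (iota N t x₁ x₂).2 / (t : ℂ)) (Set.Ioi 0) ∧
    (∫ t in Set.Ioi (0 : ℝ), phi τ (iota N t x₁ x₂).1 (iota N t x₁ x₂).2 / (t : ℂ)) = 0 := by
  have hx₁ : x₁ ≠ 0 := left_ne_zero_of_mul hx.ne
  have hx₂ : x₂ ≠ 0 := right_ne_zero_of_mul hx.ne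
  refine ⟨integrableOn_phi_iota_div hN hτ hx₁ hx₂, ?_⟩
  have hc : 0 < -(x₁ / x₂) := neg_pos.2 (div_neg_iff.2 (mul_neg_iff.1 hx))
  refine integral_div_Ioi_eq_zero_of_comp_mul_inv_eq_neg hc fun t ht => ?_
  rw [iota_comp_mul_inv N hc.ne' ht.ne' (by field_simp), phi_neg_left]

end
end
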